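/- Let n be an integer with n ≡ 3 (mod 4) and n ≥ 3, and let m be an integer with m ≥ 3n + 5. Then every transposition of the form (i, i+2) with 1 ≤ i ≤ m − 2 belongs to C(n, m). Consequently, C(n, m) equals the parity-preserving subgroup P_m of S_m. -/

import Mathlib

/-- The underlying function of the `n`-crossing permutation `π_j` over `{1, …, m}` (as a
function on `ℕ`): it sends `j + k` to `j + n - 1 - k` for `0 ≤ k ≤ n - 1` and fixes all
other points. -/
def crossFun (n j i : ℕ) : ℕ :=
  if j ≤ i ∧ i < j + n then 2 * j + n - 1 - i else i

lemma crossFun_involutive (n j : ℕ) : Function.Involutive (crossFun n j) := by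
  intro i
  unfold crossFun
  split_ifs <;> omega

/-- The `n`-crossing permutation `π_j`, viewed as a permutation of `ℕ` fixing every point
outside `{j, …, j + n - 1}`. -/
def crossPerm (n j : ℕ) : Equiv.Perm ℕ :=
  Function.Involutive.toPerm _ (crossFun_involutive n j)

/-- `C n m` is the subgroup of the symmetric group `S_m` (realized as permutations of `ℕ`
supported on `{1, …, m}`) generated by the `n`-crossing permutations `π_1, …, π_{m-n+1}`. -/
def C (n m : ℕ) : Subgroup (Equiv.Perm ℕ) :=
  Subgroup.closure {σ | ∃ j, 1 ≤ j ∧ j ≤ m - n + 1 ∧ σ = crossPerm n j}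

/-!
The generator `π_j` reverses the block `{j, …, j + n - 1}`, so it is a product of `(n - 1) / 2`
disjoint transpositions, each inside one parity class; hence `C n m` preserves parity.
Conversely, the word `π_{j+1} π_j π_{j+1} π_{j+2}` is the 3-cycle `(j, j+2, j+n+1)`, and
commutators of two such 3-cycles give the 3-cycles `(a, a+2, a+4)`. These generate the alternating
group of each parity class, so `C n m` contains every product of two transpositions inside one
class. Writing `n = 4q + 3`, the transpositions of `π_j` split between the two classes as `q + 1`
and `q`, so modulo such products `π_j` is a single transposition, in the class of `j + q`. Taking
`j = 1, 2` gives a transposition in each class, hence all of them, and these generate the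
parity-preserving permutations of `{1, …, m}`.
-/

open Equiv MulAction

/-- The 3-cycle `a ↦ b ↦ c ↦ a`. -/
def threeCycle {α : Type*} [DecidableEq α] (a b c : α) : Perm α := swap a b * swap b c

lemma threeCycle_inv {α : Type*} [DecidableEq α] (a b c : α) :
    (threeCycle a b c)⁻¹ = threeCycle c b a := by
  simp [threeCycle, swap_comm]

/-- `(q r t)` conjugates `(p q s)` to `(p r s)`, and `(p q r) = (p r s)⁻¹ (p q s)`. -/
lemma threeCycle_eq_commutator {α : Type*} [DecidableEq α] {p q r s t : α}
    (hpq : p ≠ q) (hpr : p ≠ r) (hps : p ≠ s) (hpt : p ≠ t) (hqr : q ≠ r) (hqs : q ≠ s)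
    (hqt : q ≠ t) (hrs : r ≠ s) (hrt : r ≠ t) (hst : s ≠ t) :
    threeCycle p q r =
      threeCycle q r t * (threeCycle p q s)⁻¹ * (threeCycle q r t)⁻¹ * threeCycle p q s := by
  ext x
  simp only [threeCycle, mul_inv_rev, swap_inv, Perm.mul_apply]
  by_cases hp : x = p; · subst hp; simp [swap_apply_of_ne_of_ne, *, Ne.symm]
  by_cases hq : x = q; · subst hq; simp [swap_apply_of_ne_of_ne, *, Ne.symm]
  by_cases hr : x = r; · subst hr; simp [swap_apply_of_ne_of_ne, *, Ne.symm]
  by_cases hs : x = s; · subst hs; simp [swap_apply_of_ne_of_ne, *, Ne.symm]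
  by_cases ht : x = t; · subst ht; simp [swap_apply_of_ne_of_ne, *, Ne.symm]
  simp [swap_apply_of_ne_of_ne, *]

lemma crossPerm_apply (n j i : ℕ) :
    crossPerm n j i = if j ≤ i ∧ i < j + n then 2 * j + n - 1 - i else i := rfl

lemma crossPerm_three (j : ℕ) : crossPerm 3 j = swap j (j + 2) := by
  ext x
  rw [crossPerm_apply, swap_apply_def]
  split_ifs <;> omega

lemma crossPerm_seven (j : ℕ) :
    crossPerm 7 j = swap (j + 1) (j + 5) * (swap j (j + 6) * swap (j + 2) (j + 4)) := by
  ext x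
  simp only [Perm.mul_apply, crossPerm_apply, swap_apply_def]
  split_ifs <;> omega

lemma crossPerm_add_two (k j : ℕ) :
    crossPerm (k + 2) j = swap j (j + k + 1) * crossPerm k (j + 1) := by
  ext x
  simp only [Perm.mul_apply, crossPerm_apply, swap_apply_def]
  split_ifs <;> omega

lemma crossPerm_add_eight (k j : ℕ) :
    crossPerm (k + 8) j = swap j (j + k + 7) * swap (j + 2) (j + k + 5) *
      (swap (j + 1) (j + k + 6) * swap (j + 3) (j + k + 4)) * crossPerm k (j + 4) := by
  have hc : Commute (swap (j + 1) (j + k + 6)) (swap (j + 2) (j + k + 5)) :=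
    (Perm.disjoint_swap_swap (by simp; omega)).commute
  rw [crossPerm_add_two (k + 6), crossPerm_add_two (k + 4), crossPerm_add_two (k + 2),
    crossPerm_add_two k, show j + (k + 6) + 1 = j + k + 7 by omega,
    show j + 1 + (k + 4) + 1 = j + k + 6 by omega,
    show j + 1 + 1 + (k + 2) + 1 = j + k + 5 by omega,
    show j + 1 + 1 + 1 + k + 1 = j + k + 4 by omega]
  simp only [mul_assoc, hc.left_comm]

lemma crossPerm_word_eq_threeCycle {n : ℕ} (hn : 3 ≤ n) (j : ℕ) :
    crossPerm n (j + 1) * crossPerm n j * crossPerm n (j + 1) * crossPerm n (j + 2) =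
      threeCycle j (j + 2) (j + n + 1) := by
  ext x
  simp only [threeCycle, Perm.mul_apply, crossPerm_apply, swap_apply_def]
  split_ifs <;> omega

lemma crossPerm_word_eq_threeCycle' {n : ℕ} (hn : 3 ≤ n) (j : ℕ) :
    crossPerm n (j + 1) * crossPerm n (j + 2) * crossPerm n (j + 1) * crossPerm n j =
      threeCycle (j + n + 1) (j + n - 1) j := by
  ext x
  simp only [threeCycle, Perm.mul_apply, crossPerm_apply, swap_apply_def]
  split_ifs <;> omega

section SameParitySwaps

variable {H : Subgroup (Perm ℕ)} {m : ℕ}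

lemma swap_add_two_mul_swap_add_two_mem
    (hH : ∀ a, 1 ≤ a → a + 4 ≤ m → threeCycle a (a + 2) (a + 4) ∈ H) (a b : ℕ)
    (ha : 1 ≤ a := by omega) (hb : 1 ≤ b := by omega) (ham : a + 2 ≤ m := by omega)
    (hbm : b + 2 ≤ m := by omega) (hab : a % 2 = b % 2 := by omega) :
    swap a (a + 2) * swap b (b + 2) ∈ H := by
  wlog hle : a ≤ b generalizing a b
  · have hba : swap b (b + 2) * swap a (a + 2) ∈ H := by apply this b a <;> omega
    simpa using inv_mem hba
  obtain ⟨k, rfl⟩ : ∃ k, b = a + 2 * k := ⟨(b - a) / 2, by omega⟩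
  induction k with
  | zero => simp
  | succ k ih =>
    have step := mul_mem (ih (by omega) (by omega) (by omega) (by omega))
      (hH (a + 2 * k) (by omega) (by omega))
    rw [show a + 2 * (k + 1) = a + 2 * k + 2 by ring,
      show a + 2 * k + 2 + 2 = a + 2 * k + 4 by ring]
    simpa only [threeCycle, mul_assoc, swap_mul_self_mul] using step

lemma swap_mul_swap_add_two_mem
    (hH : ∀ a, 1 ≤ a → a + 4 ≤ m → threeCycle a (a + 2) (a + 4) ∈ H) (x y a : ℕ)
    (hxy : x ≠ y := by omega) (hx : 1 ≤ x := by omega) (hy : 1 ≤ y := by omega)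
    (hxm : x ≤ m := by omega) (hym : y ≤ m := by omega) (hxy2 : x % 2 = y % 2 := by omega)
    (ha : 1 ≤ a := by omega) (ham : a + 2 ≤ m := by omega) (hxa : x % 2 = a % 2 := by omega) :
    swap x y * swap a (a + 2) ∈ H := by
  wlog hlt : x < y generalizing x y
  · rw [swap_comm]
    apply this y x <;> omega
  obtain ⟨k, rfl⟩ : ∃ k, y = x + 2 * k + 2 := ⟨(y - x) / 2 - 1, by omega⟩
  induction k with
  | zero => exact swap_add_two_mul_swap_add_two_mem hH x a
  | succ k ih =>
    set z := x + 2 * k + 2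
    have hconj : swap x (z + 2) = swap z (z + 2) * swap x z * swap z (z + 2) := by
      rw [swap_mul_swap_mul_swap (by omega) (by omega), swap_comm]
    have hza := swap_add_two_mul_swap_add_two_mem hH z a
    have hxz := ih (by omega) (by omega) (by omega) (by omega) (by omega)
    have key : swap x (z + 2) * swap a (a + 2) =
        swap z (z + 2) * swap a (a + 2) * (swap x z * swap a (a + 2))⁻¹ *
          (swap z (z + 2) * swap a (a + 2)) := by
      simp only [hconj, mul_inv_rev, swap_inv, mul_assoc, swap_mul_self_mul]
    rw [show x + 2 * (k + 1) + 2 = z + 2 by omega, key]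
    exact mul_mem (mul_mem hza (inv_mem hxz)) hza

lemma swap_mul_swap_mem
    (hH : ∀ a, 1 ≤ a → a + 4 ≤ m → threeCycle a (a + 2) (a + 4) ∈ H) (x y z w : ℕ)
    (hxy : x ≠ y := by omega) (hzw : z ≠ w := by omega) (hx : 1 ≤ x := by omega)
    (hy : 1 ≤ y := by omega) (hz : 1 ≤ z := by omega) (hw : 1 ≤ w := by omega)
    (hxm : x ≤ m := by omega) (hym : y ≤ m := by omega) (hzm : z ≤ m := by omega)
    (hwm : w ≤ m := by omega) (hxy2 : x % 2 = y % 2 := by omega)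
    (hxz2 : x % 2 = z % 2 := by omega) (hzw2 : z % 2 = w % 2 := by omega) :
    swap x y * swap z w ∈ H := by
  wlog hlt : x < y generalizing x y
  · rw [swap_comm]
    apply this y x <;> omega
  have hxs := swap_mul_swap_add_two_mem hH x y x
  have hzs := swap_mul_swap_add_two_mem hH z w x
  simpa only [mul_inv_rev, swap_inv, mul_assoc, swap_mul_self_mul] using
    mul_mem hxs (inv_mem hzs)

lemma swap_mem_of_swap_mem
    (hH : ∀ a, 1 ≤ a → a + 4 ≤ m → threeCycle a (a + 2) (a + 4) ∈ H) {x y : ℕ}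
    (hxyH : swap x y ∈ H) (z w : ℕ)
    (hxy : x ≠ y := by omega) (hzw : z ≠ w := by omega) (hx : 1 ≤ x := by omega)
    (hy : 1 ≤ y := by omega) (hz : 1 ≤ z := by omega) (hw : 1 ≤ w := by omega)
    (hxm : x ≤ m := by omega) (hym : y ≤ m := by omega) (hzm : z ≤ m := by omega)
    (hwm : w ≤ m := by omega) (hxy2 : x % 2 = y % 2 := by omega)
    (hxz2 : x % 2 = z % 2 := by omega) (hzw2 : z % 2 = w % 2 := by omega) :
    swap z w ∈ H := by
  have := mul_mem (swap_mul_swap_mem hH z w x y) hxyH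
  rwa [mul_assoc, swap_mul_self, mul_one] at this

/-- The four outermost transpositions of `π_j` form two same-class pairs; removing them reduces `n`
by 8 and shifts `j` by 4, ending at `π_3` or `π_7`, whence the class of `j + n / 4`. -/
lemma swap_mem_of_crossPerm_mem
    (hH : ∀ a, 1 ≤ a → a + 4 ≤ m → threeCycle a (a + 2) (a + 4) ∈ H) {n j : ℕ}
    (hn : n % 4 = 3) (hj : 1 ≤ j) (hjm : j + n ≤ m + 1) (hπ : crossPerm n j ∈ H) (x y : ℕ)
    (hxy : x ≠ y) (hx : 1 ≤ x) (hy : 1 ≤ y) (hxm : x ≤ m) (hym : y ≤ m)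
    (hxj : x % 2 = (j + n / 4) % 2) (hxy2 : x % 2 = y % 2) :
    swap x y ∈ H := by
  induction n using Nat.strong_induction_on generalizing j with
  | _ n ih =>
  obtain rfl | rfl | ⟨k, rfl⟩ : n = 3 ∨ n = 7 ∨ ∃ k, n = k + 8 := by
    by_cases n ≤ 7
    · omega
    · exact Or.inr (Or.inr ⟨n - 8, by omega⟩)
  · rw [crossPerm_three] at hπ
    exact swap_mem_of_swap_mem hH hπ x y
  · rw [crossPerm_seven] at hπ
    have hmid : swap (j + 1) (j + 5) ∈ H := by
      simpa only [mul_inv_rev, swap_inv, mul_assoc, swap_mul_self_mul, swap_mul_self, mul_one]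
        using mul_mem hπ (inv_mem (swap_mul_swap_mem hH j (j + 6) (j + 2) (j + 4)))
    exact swap_mem_of_swap_mem hH hmid x y
  · rw [crossPerm_add_eight] at hπ
    have hpairs := mul_mem (swap_mul_swap_mem hH j (j + k + 7) (j + 2) (j + k + 5))
      (swap_mul_swap_mem hH (j + 1) (j + k + 6) (j + 3) (j + k + 4))
    refine ih k (by omega) (by omega) (j := j + 4) (by omega) (by omega) ?_ (by omega)
    simpa only [mul_inv_rev, swap_inv, mul_assoc, swap_mul_self_mul] using
      mul_mem (inv_mem hpairs) hπ

end SameParitySwaps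

section Generation

variable {n m : ℕ}

lemma crossPerm_mem_C (j : ℕ) (hj : 1 ≤ j := by omega) (hjm : j + n ≤ m + 1 := by omega) :
    crossPerm n j ∈ C n m :=
  Subgroup.subset_closure ⟨j, hj, by omega, rfl⟩

lemma threeCycle_mem_C (hn : 3 ≤ n) (j : ℕ) (hj : 1 ≤ j := by omega)
    (hjm : j + n + 1 ≤ m := by omega) :
    threeCycle j (j + 2) (j + n + 1) ∈ C n m := by
  rw [← crossPerm_word_eq_threeCycle hn]
  exact mul_mem (mul_mem (mul_mem (crossPerm_mem_C _) (crossPerm_mem_C _)) (crossPerm_mem_C _))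
    (crossPerm_mem_C _)

lemma threeCycle_mem_C' (hn : 3 ≤ n) (j : ℕ) (hj : 1 ≤ j := by omega)
    (hjm : j + n + 1 ≤ m := by omega) :
    threeCycle (j + n + 1) (j + n - 1) j ∈ C n m := by
  rw [← crossPerm_word_eq_threeCycle' hn]
  exact mul_mem (mul_mem (mul_mem (crossPerm_mem_C _) (crossPerm_mem_C _)) (crossPerm_mem_C _))
    (crossPerm_mem_C _)

lemma threeCycle_add_two_add_four_mem_C (hn : n % 4 = 3) (hm : 2 * n + 2 ≤ m) (a : ℕ)
    (ha : 1 ≤ a) (ham : a + 4 ≤ m) : threeCycle a (a + 2) (a + 4) ∈ C n m := by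
  obtain rfl | hn7 : n = 3 ∨ 7 ≤ n := by omega
  · exact threeCycle_mem_C le_rfl a
  by_cases hlow : a + n + 3 ≤ m
  · have hu := threeCycle_mem_C (n := n) (m := m) (by omega) a
    have hv := threeCycle_mem_C (n := n) (m := m) (by omega) (a + 2)
    rw [show a + 2 + 2 = a + 4 by omega, show a + 2 + n + 1 = a + n + 3 by omega] at hv
    rw [threeCycle_eq_commutator (s := a + n + 1) (t := a + n + 3)]
    · exact mul_mem (mul_mem (mul_mem hv (inv_mem hu)) (inv_mem hv)) hu
    all_goals omega
  · have hu := threeCycle_mem_C' (n := n) (m := m) (by omega) (a + 3 - n)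
    have hv := threeCycle_mem_C' (n := n) (m := m) (by omega) (a + 1 - n)
    rw [show a + 3 - n + n + 1 = a + 4 by omega, show a + 3 - n + n - 1 = a + 2 by omega] at hu
    rw [show a + 1 - n + n + 1 = a + 2 by omega, show a + 1 - n + n - 1 = a by omega] at hv
    rw [← inv_inv (threeCycle a _ _), threeCycle_inv,
      threeCycle_eq_commutator (s := a + 3 - n) (t := a + 1 - n)]
    · exact inv_mem (mul_mem (mul_mem (mul_mem hv (inv_mem hu)) (inv_mem hv)) hu)
    all_goals omega

lemma swap_mem_C (hn : n % 4 = 3) (hm : 2 * n + 2 ≤ m) {x y : ℕ} (hxy : x ≠ y) (hx : 1 ≤ x)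
    (hy : 1 ≤ y) (hxm : x ≤ m) (hym : y ≤ m) (hxy2 : x % 2 = y % 2) : swap x y ∈ C n m := by
  obtain ⟨j, hj1, hj2, hjx⟩ : ∃ j, 1 ≤ j ∧ j ≤ 2 ∧ x % 2 = (j + n / 4) % 2 :=
    ⟨2 - (x + n / 4) % 2, by omega, by omega, by omega⟩
  exact swap_mem_of_crossPerm_mem (threeCycle_add_two_add_four_mem_C hn hm) hn hj1 (by omega)
    (crossPerm_mem_C j) x y hxy hx hy hxm hym hjx hxy2

end Generation

def parityPreserving : Subgroup (Perm ℕ) where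
  carrier := {σ | ∀ i, σ i % 2 = i % 2}
  mul_mem' hσ hτ i := (hσ _).trans (hτ i)
  one_mem' _ := rfl
  inv_mem' {σ} hσ i := by simpa using (hσ (σ⁻¹ i)).symm

lemma C_le_parityPreserving_inf_fixingSubgroup {n m : ℕ} (hn : n % 2 = 1) (hnm : n ≤ m) :
    C n m ≤ parityPreserving ⊓ fixingSubgroup (Perm ℕ) (Set.Icc 1 m)ᶜ := by
  rw [C, Subgroup.closure_le]
  rintro _ ⟨j, hj, hjm, rfl⟩
  refine ⟨fun i => ?_, (mem_fixingSubgroup_iff _).mpr fun i hi => ?_⟩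
  · rw [crossPerm_apply]
    split_ifs <;> omega
  · simp only [Set.mem_compl_iff, Set.mem_Icc] at hi
    rw [Perm.smul_def, crossPerm_apply]
    split_ifs <;> omega

lemma parityPreserving_inf_fixingSubgroup_le {H : Subgroup (Perm ℕ)} {m : ℕ}
    (hH : ∀ x y, x ≠ y → 1 ≤ x → 1 ≤ y → x ≤ m → y ≤ m → x % 2 = y % 2 → swap x y ∈ H) :
    parityPreserving ⊓ fixingSubgroup (Perm ℕ) (Set.Icc 1 m)ᶜ ≤ H := by
  intro σ hσ
  obtain ⟨hpar, hfix⟩ := Subgroup.mem_inf.mp hσ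
  have hmoved (x : ℕ) (hx : σ x ≠ x) : x ∈ Set.Icc 1 m :=
    not_not.mp fun h => hx ((mem_fixingSubgroup_iff _).mp hfix x h)
  let S := {τ : Perm ℕ | τ.IsSwap ∧ τ ∈ H}
  suffices σ ∈ Subgroup.closure S from (Subgroup.closure_le H).mpr (fun τ hτ => hτ.2) this
  refine (mem_closure_isSwap fun τ hτ => hτ.1).mpr
    ⟨(Set.finite_Icc 1 m).subset fun x hx => hmoved x hx, fun x => ?_⟩
  by_cases hx : σ x = x
  · rw [hx]
    exact mem_orbit_self x
  have hx' := hmoved x hx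
  have hσx := hmoved (σ x) (fun h => hx (σ.injective h))
  have hswap : swap x (σ x) ∈ H :=
    hH x (σ x) (Ne.symm hx) hx'.1 hσx.1 hx'.2 hσx.2 (hpar x).symm
  exact ⟨⟨swap x (σ x), Subgroup.subset_closure ⟨⟨x, σ x, Ne.symm hx, rfl⟩, hswap⟩⟩,
    swap_apply_left x (σ x)⟩

lemma C_eq_parityPreserving_inf_fixingSubgroup {n m : ℕ} (hn : n % 4 = 3) (hm : 2 * n + 2 ≤ m) :
    C n m = parityPreserving ⊓ fixingSubgroup (Perm ℕ) (Set.Icc 1 m)ᶜ :=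
  le_antisymm (C_le_parityPreserving_inf_fixingSubgroup (by omega) (by omega))
    (parityPreserving_inf_fixingSubgroup_le fun _ _ => swap_mem_C hn hm)

lemma mem_parityPreserving_inf_fixingSubgroup_iff {m : ℕ} {σ : Perm ℕ} :
    σ ∈ parityPreserving ⊓ fixingSubgroup (Perm ℕ) (Set.Icc 1 m)ᶜ ↔
      (∀ i, 1 ≤ i → i ≤ m → σ i % 2 = i % 2) ∧ (∀ i, σ i ≠ i → 1 ≤ i ∧ i ≤ m) := by
  simp only [Subgroup.mem_inf, mem_fixingSubgroup_iff, Set.mem_compl_iff, Set.mem_Icc,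
    Perm.smul_def]
  constructor
  · rintro ⟨hpar, hfix⟩
    exact ⟨fun i _ _ => hpar i, fun i hi => not_not.mp fun h => hi (hfix i h)⟩
  · rintro ⟨hpar, hsupp⟩
    refine ⟨fun i => ?_, fun i hi => not_not.mp fun h => hi (hsupp i h)⟩
    by_cases h : σ i = i
    · rw [h]
    · exact hpar i (hsupp i h).1 (hsupp i h).2

theorem stmt13_general (n : ℕ) (hn : n % 4 = 3)
    (m : ℕ) (hm : 3 * n + 5 ≤ m) :
    (∀ i, 1 ≤ i → i + 2 ≤ m → Equiv.swap i (i + 2) ∈ C n m) ∧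
    (∀ σ : Equiv.Perm ℕ, σ ∈ C n m ↔
      ((∀ i, 1 ≤ i → i ≤ m → σ i % 2 = i % 2) ∧ (∀ i, σ i ≠ i → 1 ≤ i ∧ i ≤ m))) := by
  have hm' : 2 * n + 2 ≤ m := by omega
  refine ⟨fun i hi him => swap_mem_C hn hm' (by omega) hi (by omega) (by omega) him (by omega),
    fun σ => ?_⟩
  rw [C_eq_parityPreserving_inf_fixingSubgroup hn hm', mem_parityPreserving_inf_fixingSubgroup_iff]

theorem stmt13 (n : ℕ) (hn : n % 4 = 3) (hn3 : 3 ≤ n)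
    (m : ℕ) (hm : 3 * n + 5 ≤ m) :
    (∀ i, 1 ≤ i → i + 2 ≤ m → Equiv.swap i (i + 2) ∈ C n m) ∧
    (∀ σ : Equiv.Perm ℕ, σ ∈ C n m ↔
      ((∀ i, 1 ≤ i → i ≤ m → σ i % 2 = i % 2) ∧ (∀ i, σ i ≠ i → 1 ≤ i ∧ i ≤ m))) :=
  stmt13_general n hn m hm
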